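/- Let $R$ be an $n\times n$ real symmetric positive definite matrix, $\lambda, \lambda_z > 0$, $\tilde R = R + (n/\lambda_z) I_n$, $R_{z} = R - R \tilde R^{-1} R$, $r \in \mathbb{R}^n$, and $r_z = r - R \tilde R^{-1} r$. Then $r_{z}^T (R_{z} + n\lambda I_n)^{-1} = \frac{1}{1+\lambda\lambda_z}\, r^T \left(R + \frac{n\lambda}{1+\lambda\lambda_z} I_n\right)^{-1}$. -/

import Mathlib

/-!
Write `T = R + c I` with `c = n / λ_z`. Since `R = T - c I`, `R T⁻¹ = I - c T⁻¹`, so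
`r_z = c T⁻¹ r` and `R_z = c R T⁻¹`. Hence `(R_z + nλ I) T = c R + nλ T = (c + nλ) (R + e I)` with
`e = nλ / (1 + λ λ_z)`, and the factor `T⁻¹` of `r_z` cancels against `T` in `(R_z + nλ I)⁻¹`,
leaving `c / (c + nλ) = 1 / (1 + λ λ_z)` in front. Symmetry of `T⁻¹` turns `r_z` into a row vector.
-/
open Matrix

namespace Matrix

variable {m K : Type*} [Fintype m] [DecidableEq m] [Field K] {A : Matrix m m K} {c : K}

theorem mul_inv_add_smul_one (h : IsUnit (A + c • 1).det) :
    A * (A + c • 1)⁻¹ = 1 - c • (A + c • 1)⁻¹ := by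
  rw [eq_sub_iff_add_eq]
  calc A * (A + c • 1)⁻¹ + c • (A + c • 1)⁻¹ = (A + c • 1) * (A + c • 1)⁻¹ := by
        rw [Matrix.add_mul, Matrix.smul_mul, Matrix.one_mul]
    _ = 1 := mul_nonsing_inv _ h

theorem inv_add_smul_one_mul (h : IsUnit (A + c • 1).det) :
    (A + c • 1)⁻¹ * A = 1 - c • (A + c • 1)⁻¹ := by
  rw [eq_sub_iff_add_eq]
  calc (A + c • 1)⁻¹ * A + c • (A + c • 1)⁻¹ = (A + c • 1)⁻¹ * (A + c • 1) := by
        rw [Matrix.mul_add, Matrix.mul_smul, Matrix.mul_one]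
    _ = 1 := nonsing_inv_mul _ h

theorem sub_mul_inv_add_smul_one_mul (h : IsUnit (A + c • 1).det) :
    A - A * (A + c • 1)⁻¹ * A = c • (A * (A + c • 1)⁻¹) := by
  rw [Matrix.mul_assoc, inv_add_smul_one_mul h, Matrix.mul_sub, Matrix.mul_one, sub_sub_cancel,
    Matrix.mul_smul]

theorem sub_mulVec_inv_add_smul_one_mulVec (h : IsUnit (A + c • 1).det) (v : m → K) :
    v - A *ᵥ ((A + c • 1)⁻¹ *ᵥ v) = c • ((A + c • 1)⁻¹ *ᵥ v) := by
  rw [mulVec_mulVec, mul_inv_add_smul_one h, sub_mulVec, one_mulVec, sub_sub_cancel, smul_mulVec]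

theorem smul_mul_inv_add_smul_one_add_smul_one_mul (h : IsUnit (A + c • 1).det) {d e : K}
    (he : (c + d) * e = d * c) :
    (c • (A * (A + c • 1)⁻¹) + d • 1) * (A + c • 1) = (c + d) • (A + e • 1) := by
  rw [Matrix.add_mul, Matrix.smul_mul, Matrix.smul_mul, Matrix.mul_assoc, nonsing_inv_mul _ h,
    Matrix.mul_one, Matrix.one_mul, smul_add (c + d), smul_smul (c + d), he]
  module

end Matrix

theorem sgasp_shrinkage_weights (n : ℕ) (hn : 0 < n) (R : Matrix (Fin n) (Fin n) ℝ)
    (hR : R.PosDef) (lam lamz : ℝ) (hlam : 0 < lam) (hlamz : 0 < lamz) (r : Fin n → ℝ) :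
    Matrix.vecMul
        (r - R.mulVec ((R + ((n : ℝ) / lamz) • (1 : Matrix (Fin n) (Fin n) ℝ))⁻¹.mulVec r))
        ((R - R * (R + ((n : ℝ) / lamz) • (1 : Matrix (Fin n) (Fin n) ℝ))⁻¹ * R)
          + ((n : ℝ) * lam) • (1 : Matrix (Fin n) (Fin n) ℝ))⁻¹
      = (1 / (1 + lam * lamz)) • Matrix.vecMul r
          (R + ((n : ℝ) * lam / (1 + lam * lamz)) • (1 : Matrix (Fin n) (Fin n) ℝ))⁻¹ := by
  set c : ℝ := n / lamz
  set d : ℝ := n * lam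
  set e : ℝ := n * lam / (1 + lam * lamz)
  have hcd : c + d ≠ 0 := by positivity
  have he : (c + d) * e = d * c := by simp only [c, d, e]; field_simp
  have hT : (R + c • 1).PosDef := hR.add_posSemidef (PosSemidef.one.smul (by positivity))
  have hTu : IsUnit (R + c • 1).det := (isUnit_iff_isUnit_det _).mp hT.isUnit
  have hQu : IsUnit (R + e • 1).det :=
    (isUnit_iff_isUnit_det _).mp (hR.add_posSemidef (PosSemidef.one.smul (by positivity))).isUnit
  have hTinv : (R + c • 1)⁻¹.IsSymm := (isHermitian_iff_isSymm.mp hT.isHermitian).inv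
  have : Invertible (c + d) := invertibleOfNonzero hcd
  rw [sub_mulVec_inv_add_smul_one_mulVec hTu, sub_mul_inv_add_smul_one_mul hTu,
    ← vecMul_transpose, hTinv.eq, smul_vecMul, vecMul_vecMul, ← Matrix.mul_inv_rev,
    smul_mul_inv_add_smul_one_add_smul_one_mul hTu he,
    Matrix.inv_smul (A := R + e • 1) (c + d) hQu, vecMul_smul, smul_smul, invOf_eq_inv]
  congr 1
  simp only [c, d]
  field_simp
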